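/- arXiv:math/9505216 — 4 statements merged into one kernel-verified Lean document; each statement's English description precedes it below -/
import Mathlib

section
/- Let A be a set of size 2n (n ≥ 1) with distinguished elements x_1, …, x_n ∈ A. For each i with 0 ≤ i < n, the number of unordered pairs {H_0, H_1} of distinct (n+i)-element subsets of A, each containing {x_1,…,x_i}, with H_0 ∪ H_1 = A, is at least (1/2)·C(2n−i, n)·C(n, i). Moreover, pairs arising from different values of i are distinct, so the total number of such unordered covering pairs over all 0 ≤ i < n is at least T_n = (1/2)·∑_{i=1}^{n} C(n+i,n)·C(n,i). -/
/-- `T n = (1/2) ∑_{i=1}^n C(n+i,n) C(n,i)` (the sum is even, so natural division is exact). -/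
def T (n : ℕ) : ℕ := (∑ i ∈ Finset.Icc 1 n, (n + i).choose n * n.choose i) / 2

/-!
Fix `X ⊆ A` with `#X = i < n`. An ordered pair `(H₀, H₁)` of distinct `(n + i)`-sets containing
`X` and covering `A` can be built as `H₀ = X ∪ K`, `H₁ = A \ R`, from any `n`-set `K ⊆ A \ X` and
any `(n - i)`-set `R ⊆ K`; distinct choices give distinct pairs, so there are at least
`C(2n - i, n) · C(n, i)` ordered pairs, and each unordered pair `{H₀, H₁}` comes from at most two
of them. Pairs for different `i` consist of sets of different sizes, so the bounds add up, and
`i ↦ n - i` turns the resulting sum into the one defining `T n`.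
-/

open Finset

namespace Finset

variable {β : Type*} [DecidableEq β]

lemma eq_pair_of_card_eq_two {P : Finset β} {a b : β} (hP : #P = 2) (ha : a ∈ P) (hb : b ∈ P)
    (hab : a ≠ b) : P = {a, b} :=
  (eq_of_subset_of_card_le (insert_subset ha (singleton_subset_iff.2 hb))
    (by rw [hP, card_pair hab])).symm

lemma mem_image_pair_iff {s : Finset (β × β)} {Q : β → β → Prop}
    (hs : ∀ a b, (a, b) ∈ s ↔ a ≠ b ∧ Q a b) {P : Finset β} :
    P ∈ s.image (fun p => ({p.1, p.2} : Finset β)) ↔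
      #P = 2 ∧ ∃ a ∈ P, ∃ b ∈ P, a ≠ b ∧ Q a b := by
  simp only [mem_image, Prod.exists]
  constructor
  · rintro ⟨a, b, hab, rfl⟩
    obtain ⟨hne, hQ⟩ := (hs a b).1 hab
    exact ⟨card_pair hne, a, mem_insert_self _ _, b, mem_insert_of_mem (mem_singleton_self _),
      hne, hQ⟩
  · rintro ⟨hP, a, ha, b, hb, hab, hQ⟩
    exact ⟨a, b, (hs a b).2 ⟨hab, hQ⟩, (eq_pair_of_card_eq_two hP ha hb hab).symm⟩

lemma card_le_two_mul_card_image_pair (s : Finset (β × β)) (hs : ∀ p ∈ s, p.1 ≠ p.2) :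
    #s ≤ 2 * #(s.image fun p => ({p.1, p.2} : Finset β)) := by
  refine card_le_mul_card_image s 2 fun P hP => ?_
  obtain ⟨q, hq, rfl⟩ := mem_image.1 hP
  calc #{p ∈ s | ({p.1, p.2} : Finset β) = {q.1, q.2}}
      ≤ #({q.1, q.2} : Finset β) := by
        refine card_le_card_of_injOn Prod.fst (fun p hp => ?_) fun p hp p' hp' h => ?_
        · rw [mem_coe, mem_filter] at hp
          exact hp.2 ▸ mem_insert_self _ _
        · simp only [coe_filter, Set.mem_ofPred_eq] at hp hp'
          have hp2 : p.2 ∈ ({p'.1, p'.2} : Finset β) :=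
            hp.2.trans hp'.2.symm ▸ mem_insert_of_mem (mem_singleton_self _)
          rcases mem_insert.1 hp2 with h2 | h2
          · exact absurd (h.trans h2.symm) (hs p hp.1)
          · exact Prod.ext h (mem_singleton.1 h2)
    _ = 2 := card_pair (hs q hq)

end Finset

section CoveringPairs

variable {α : Type*} [DecidableEq α]

def orderedCoveringPairs (A X : Finset α) (m : ℕ) : Finset (Finset α × Finset α) :=
  {p ∈ A.powersetCard m ×ˢ A.powersetCard m | p.1 ≠ p.2 ∧ p.1 ∪ p.2 = A ∧ X ⊆ p.1 ∩ p.2}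

def coveringPairs (A X : Finset α) (m : ℕ) : Finset (Finset (Finset α)) :=
  (orderedCoveringPairs A X m).image fun p => {p.1, p.2}

variable {A X H₀ H₁ : Finset α} {m n i : ℕ}

lemma mem_orderedCoveringPairs :
    (H₀, H₁) ∈ orderedCoveringPairs A X m ↔
      H₀ ≠ H₁ ∧ H₀ ∪ H₁ = A ∧ #H₀ = m ∧ #H₁ = m ∧ X ⊆ H₀ ∩ H₁ := by
  simp only [orderedCoveringPairs, mem_filter, mem_product, mem_powersetCard]
  constructor
  · rintro ⟨⟨⟨-, h₀⟩, -, h₁⟩, hne, hcover, hX⟩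
    exact ⟨hne, hcover, h₀, h₁, hX⟩
  · rintro ⟨hne, rfl, h₀, h₁, hX⟩
    exact ⟨⟨⟨subset_union_left, h₀⟩, subset_union_right, h₁⟩, hne, rfl, hX⟩

lemma mem_coveringPairs {P : Finset (Finset α)} :
    P ∈ coveringPairs A X m ↔ #P = 2 ∧ ∃ H₀ ∈ P, ∃ H₁ ∈ P, H₀ ≠ H₁ ∧
      H₀ ∪ H₁ = A ∧ #H₀ = m ∧ #H₁ = m ∧ X ⊆ H₀ ∩ H₁ :=
  mem_image_pair_iff fun _ _ => mem_orderedCoveringPairs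

lemma card_eq_of_mem_coveringPairs {P : Finset (Finset α)} (hP : P ∈ coveringPairs A X m)
    {H : Finset α} (hH : H ∈ P) : #H = m := by
  obtain ⟨⟨H₀, H₁⟩, hp, rfl⟩ := mem_image.1 hP
  obtain ⟨-, -, h₀, h₁, -⟩ := mem_orderedCoveringPairs.1 hp
  rcases mem_insert.1 hH with rfl | hH
  · exact h₀
  · exact mem_singleton.1 hH ▸ h₁

lemma disjoint_coveringPairs {Y : Finset α} {m' : ℕ} (h : m ≠ m') :
    Disjoint (coveringPairs A X m) (coveringPairs A Y m') := by
  refine disjoint_left.2 fun P hP hP' => h ?_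
  obtain ⟨-, H, hH, -⟩ := mem_coveringPairs.1 hP
  exact (card_eq_of_mem_coveringPairs hP hH).symm.trans (card_eq_of_mem_coveringPairs hP' hH)

lemma union_sdiff_mem_orderedCoveringPairs {K R : Finset α} (hA : #A = 2 * n) (hXA : X ⊆ A)
    (hX : #X = i) (hi : i < n) (hK : K ⊆ A \ X) (hKc : #K = n) (hR : R ⊆ K) (hRc : #R = n - i) :
    (X ∪ K, A \ R) ∈ orderedCoveringPairs A X (n + i) := by
  have hXK : Disjoint X K := disjoint_of_subset_right hK disjoint_sdiff
  have hKA : K ⊆ A := hK.trans sdiff_subset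
  obtain ⟨r, hr⟩ : R.Nonempty := card_pos.1 (by omega)
  refine mem_orderedCoveringPairs.2 ⟨fun h => ?_, ?_, ?_, ?_, ?_⟩
  · exact (mem_sdiff.1 (h ▸ mem_union_right X (hR hr))).2 hr
  · refine (union_subset (union_subset hXA hKA) sdiff_subset).antisymm fun a ha => ?_
    by_cases haR : a ∈ R
    · exact mem_union_left _ (mem_union_right _ (hR haR))
    · exact mem_union_right _ (mem_sdiff.2 ⟨ha, haR⟩)
  · rw [card_union_of_disjoint hXK, hX, hKc, add_comm]
  · rw [card_sdiff_of_subset (hR.trans hKA), hA, hRc]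
    omega
  · exact subset_inter subset_union_left
      (subset_sdiff.2 ⟨hXA, disjoint_of_subset_right hR hXK⟩)

lemma le_card_orderedCoveringPairs (hA : #A = 2 * n) (hXA : X ⊆ A) (hX : #X = i) (hi : i < n) :
    (2 * n - i).choose n * n.choose i ≤ #(orderedCoveringPairs A X (n + i)) := by
  set D := ((A \ X).powersetCard n).sigma fun K => K.powersetCard (n - i)
  have hD : #D = (2 * n - i).choose n * n.choose i := by
    rw [card_sigma, sum_congr rfl fun K hK => by rw [card_powersetCard, (mem_powersetCard.1 hK).2],
      sum_const, card_powersetCard, card_sdiff_of_subset hXA, hA, hX, smul_eq_mul,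
      Nat.choose_symm hi.le]
  rw [← hD]
  refine card_le_card_of_injOn (fun q => (X ∪ q.1, A \ q.2)) (fun q hq => ?_)
    fun q hq q' hq' h => ?_
  · obtain ⟨⟨hK, hKc⟩, hR, hRc⟩ := by
      simpa only [D, mem_coe, mem_sigma, mem_powersetCard] using hq
    exact union_sdiff_mem_orderedCoveringPairs hA hXA hX hi hK hKc hR hRc
  · simp only [D, coe_sigma, Set.mem_sigma_iff, mem_coe, mem_powersetCard] at hq hq'
    obtain ⟨h₀, h₁⟩ : X ∪ q.1 = X ∪ q'.1 ∧ A \ q.2 = A \ q'.2 := Prod.ext_iff.1 h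
    have hK : q.1 = q'.1 := by
      rw [← union_sdiff_cancel_left (disjoint_of_subset_right hq.1.1 disjoint_sdiff),
        ← union_sdiff_cancel_left (disjoint_of_subset_right hq'.1.1 disjoint_sdiff), h₀]
    have hR : q.2 = q'.2 := by
      rw [← Finset.sdiff_sdiff_eq_self (hq.2.1.trans (hq.1.1.trans sdiff_subset)),
        ← Finset.sdiff_sdiff_eq_self (hq'.2.1.trans (hq'.1.1.trans sdiff_subset)), h₁]
    exact Sigma.ext hK (heq_of_eq hR)

lemma le_two_mul_card_coveringPairs (hA : #A = 2 * n) (hXA : X ⊆ A) (hX : #X = i) (hi : i < n) :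
    (2 * n - i).choose n * n.choose i ≤ 2 * #(coveringPairs A X (n + i)) :=
  (le_card_orderedCoveringPairs hA hXA hX hi).trans <| card_le_two_mul_card_image_pair _
    fun _ hp => (mem_orderedCoveringPairs.1 hp).1

end CoveringPairs

lemma ncard_setOf_exists_lt_mem {γ : Type*} [DecidableEq γ] {F : ℕ → Finset γ} {n : ℕ}
    (h : (range n : Set ℕ).PairwiseDisjoint F) :
    {P | ∃ i < n, P ∈ F i}.ncard = ∑ i ∈ range n, #(F i) := by
  rw [← card_biUnion h, ← Set.ncard_coe_finset]
  congr 1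
  ext P
  simp

lemma sum_range_choose_two_mul_sub_eq_sum_Icc (n : ℕ) :
    ∑ i ∈ range n, (2 * n - i).choose n * n.choose i =
      ∑ i ∈ Icc 1 n, (n + i).choose n * n.choose i := by
  refine sum_nbij' (n - ·) (n - ·) (fun i hi => ?_) (fun i hi => ?_) (fun i hi => ?_)
    (fun i hi => ?_) fun i hi => ?_ <;> simp only [mem_range, mem_Icc] at hi ⊢
  · omega
  · omega
  · omega
  · omega
  · rw [show n + (n - i) = 2 * n - i by omega, Nat.choose_symm hi.le]

theorem stmt_3_general {α : Type*} [DecidableEq α] (n : ℕ)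
    (A : Finset α) (hA : A.card = 2 * n)
    (x : Fin n → α) (hxinj : Function.Injective x) (hxA : ∀ j, x j ∈ A) :
    (∀ i < n,
      {P : Finset (Finset α) | P.card = 2 ∧ ∃ H0 ∈ P, ∃ H1 ∈ P, H0 ≠ H1 ∧
          H0 ∪ H1 = A ∧ H0.card = n + i ∧ H1.card = n + i ∧
          ∀ j : Fin n, (j : ℕ) < i → x j ∈ H0 ∩ H1}.ncard ≥
        ((2 * n - i).choose n * n.choose i) / 2) ∧
    {P : Finset (Finset α) | ∃ i < n, P.card = 2 ∧ ∃ H0 ∈ P, ∃ H1 ∈ P, H0 ≠ H1 ∧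
        H0 ∪ H1 = A ∧ H0.card = n + i ∧ H1.card = n + i ∧
        ∀ j : Fin n, (j : ℕ) < i → x j ∈ H0 ∩ H1}.ncard ≥ T n := by
  set X : ℕ → Finset α := fun i => ({j : Fin n | (j : ℕ) < i} : Finset _).image x
  have hX : ∀ i (H : Finset α), (∀ j : Fin n, (j : ℕ) < i → x j ∈ H) ↔ X i ⊆ H := by
    simp [X, image_subset_iff]
  have hbound : ∀ i < n,
      (2 * n - i).choose n * n.choose i ≤ 2 * #(coveringPairs A (X i) (n + i)) :=
    fun i hi => le_two_mul_card_coveringPairs hA (image_subset_iff.2 fun j _ => hxA j)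
      (by rw [card_image_of_injective _ hxinj, Fin.card_filter_val_lt, min_eq_right hi.le]) hi
  simp only [hX, ← mem_coveringPairs, setOfPred_mem, Set.ncard_coe_finset]
  refine ⟨fun i hi => by have := hbound i hi; omega, ?_⟩
  rw [ncard_setOf_exists_lt_mem fun i _ j _ hij => disjoint_coveringPairs (by omega), T,
    ← sum_range_choose_two_mul_sub_eq_sum_Icc]
  have := sum_le_sum fun i hi => hbound i (mem_range.1 hi)
  rw [← mul_sum] at this
  omega

theorem stmt_3 {α : Type*} [DecidableEq α] (n : ℕ) (hn : 1 ≤ n)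
    (A : Finset α) (hA : A.card = 2 * n)
    (x : Fin n → α) (hxinj : Function.Injective x) (hxA : ∀ j, x j ∈ A) :
    (∀ i < n,
      {P : Finset (Finset α) | P.card = 2 ∧ ∃ H0 ∈ P, ∃ H1 ∈ P, H0 ≠ H1 ∧
          H0 ∪ H1 = A ∧ H0.card = n + i ∧ H1.card = n + i ∧
          ∀ j : Fin n, (j : ℕ) < i → x j ∈ H0 ∩ H1}.ncard ≥
        ((2 * n - i).choose n * n.choose i) / 2) ∧
    {P : Finset (Finset α) | ∃ i < n, P.card = 2 ∧ ∃ H0 ∈ P, ∃ H1 ∈ P, H0 ≠ H1 ∧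
        H0 ∪ H1 = A ∧ H0.card = n + i ∧ H1.card = n + i ∧
        ∀ j : Fin n, (j : ℕ) < i → x j ∈ H0 ∩ H1}.ncard ≥ T n :=
  stmt_3_general n A hA x hxinj hxA
end

section
/- If for every ordinal α < ω_n a bijection φ_α : α → |α| is fixed, and for a finite set x ⊆ ω_n one defines γ_0(x) = max(x) and γ_{i+1}(x) = φ_{γ_0(x)}^{-1}(γ_i(φ_{γ_0(x)}[x ∩ γ_0(x)])) for i+1 < min(n, |x|), then for every s ∈ [ω_n]^{≤n} the set {x ∈ [ω_n]^{<ω} : γ(x) = s} is countable, where γ(x) = {γ_0(x), …, γ_{k−1}(x)} with k = min(n, |x|). -/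
/-!
Every `γ_i(x)` lies in `x`, so `γ(x) = s` forces `max x = max s =: α`. Removing `α` and
transporting the rest along `φ_α` gives `φ_α[x ∩ α]`, a finite subset of `|α| ≤ ω_{n-1}`
whose `γ`-set is `φ_α[s ∖ {α}]`, and `x` is recovered from it as `{α} ∪ φ_α⁻¹[…]`.
So the fibre of `γ` over `s` in `ω_n` injects into a fibre over a set in `ω_{n-1}`, and
induction on `n` ends at `ω_0`, where there are only countably many finite sets at all.
-/

open Cardinal Ordinal

/-- `φ_α[x ∩ α]` when `α` is the maximum of `x`. -/
def shift {ι : Type*} [DecidableEq ι] (φ : ι → ι → ι) (α : ι) (x : Finset ι) : Finset ι :=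
  (x.erase α).image (φ α)

def gammaSet {ι : Type*} [DecidableEq ι] (n : ℕ) (gam : ℕ → Finset ι → ι) (x : Finset ι) :
    Finset ι :=
  (Finset.range (min n x.card)).image (fun i => gam i x)

def gammaFiber (n : ℕ) (gam : ℕ → Finset Ordinal → Ordinal) (s : Finset Ordinal) :
    Set (Finset Ordinal) :=
  {x | (∀ a ∈ x, a < (aleph n).ord) ∧ gammaSet n gam x = s}

theorem mem_gammaFiber {n : ℕ} {gam : ℕ → Finset Ordinal → Ordinal} {s x : Finset Ordinal} :
    x ∈ gammaFiber n gam s ↔ (∀ a ∈ x, a < (aleph n).ord) ∧ gammaSet n gam x = s :=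
  Iff.rfl

structure IsGamma {ι : Type*} [LinearOrder ι] (n : ℕ) (φ ψ : ι → ι → ι)
    (gam : ℕ → Finset ι → ι) : Prop where
  left_inv : ∀ α β : ι, β < α → ψ α (φ α β) = β
  zero : ∀ (x : Finset ι) (h : x.Nonempty), gam 0 x = x.max' h
  succ : ∀ (x : Finset ι) (i : ℕ), i + 1 < min n x.card →
    gam (i + 1) x = ψ (gam 0 x) (gam i ((x.filter (fun a => a < gam 0 x)).image (φ (gam 0 x))))

section Shift

variable {ι : Type*} [LinearOrder ι] {φ : ι → ι → ι} {α : ι} {x : Finset ι}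

theorem erase_subset_Iio (hx : IsGreatest (x : Set ι) α) :
    ((x.erase α : Finset ι) : Set ι) ⊆ Set.Iio α := fun _ hb =>
  (hx.2 (Finset.mem_of_mem_erase hb)).lt_of_ne (Finset.ne_of_mem_erase hb)

theorem filter_lt_eq_erase (hx : IsGreatest (x : Set ι) α) :
    x.filter (fun a => a < α) = x.erase α := by
  ext b
  refine ⟨fun hb => ?_, fun hb => ?_⟩
  · rw [Finset.mem_filter] at hb
    exact Finset.mem_erase.2 ⟨hb.2.ne, hb.1⟩
  · exact Finset.mem_filter.2 ⟨Finset.mem_of_mem_erase hb, erase_subset_Iio hx hb⟩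

theorem card_shift (hφ : Set.InjOn (φ α) (Set.Iio α)) (hx : IsGreatest (x : Set ι) α) :
    (shift φ α x).card = x.card - 1 := by
  rw [shift, Finset.card_image_of_injOn (hφ.mono (erase_subset_Iio hx)),
    Finset.card_erase_of_mem hx.1]

theorem shift_lt {β : ι} (hφ : Set.MapsTo (φ α) (Set.Iio α) (Set.Iio β))
    (hx : IsGreatest (x : Set ι) α) : ∀ b ∈ shift φ α x, b < β := by
  intro b hb
  obtain ⟨c, hc, rfl⟩ := Finset.mem_image.1 hb
  exact hφ (erase_subset_Iio hx hc)

theorem shift_injOn (hφ : Set.InjOn (φ α) (Set.Iio α)) :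
    Set.InjOn (shift φ α) {x | IsGreatest (x : Set ι) α} := by
  intro x hx y hy hxy
  have herase : x.erase α = y.erase α := by
    rw [← Finset.coe_inj, ← hφ.image_eq_image_iff (erase_subset_Iio hx) (erase_subset_Iio hy)]
    simpa only [shift, Finset.coe_image] using congrArg ((↑) : Finset ι → Set ι) hxy
  rw [← Finset.insert_erase hx.1, ← Finset.insert_erase hy.1, herase]

end Shift

namespace IsGamma

variable {ι : Type*} [LinearOrder ι] {n : ℕ} {φ ψ : ι → ι → ι} {gam : ℕ → Finset ι → ι}
  {α : ι} {x : Finset ι}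

theorem injOn (hG : IsGamma n φ ψ gam) (α : ι) : Set.InjOn (φ α) (Set.Iio α) :=
  Set.LeftInvOn.injOn fun β hβ => hG.left_inv α β hβ

theorem of_succ (hG : IsGamma (n + 1) φ ψ gam) : IsGamma n φ ψ gam where
  left_inv := hG.left_inv
  zero := hG.zero
  succ x i hi := hG.succ x i (by omega)

theorem gam_zero_eq (hG : IsGamma n φ ψ gam) (hx : IsGreatest (x : Set ι) α) :
    gam 0 x = α := by
  rw [hG.zero x ⟨α, hx.1⟩]
  exact (x.isGreatest_max' _).unique hx

theorem gam_succ_eq (hG : IsGamma n φ ψ gam) (hx : IsGreatest (x : Set ι) α) {i : ℕ}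
    (hi : i + 1 < min n x.card) : gam (i + 1) x = ψ α (gam i (shift φ α x)) := by
  rw [hG.succ x i hi, hG.gam_zero_eq hx, filter_lt_eq_erase hx, shift]

theorem gam_succ_of_mem (hG : IsGamma n φ ψ gam) (hx : IsGreatest (x : Set ι) α) {i : ℕ}
    (hi : i + 1 < min n x.card) (hmem : gam i (shift φ α x) ∈ shift φ α x) :
    gam (i + 1) x ∈ x.erase α ∧ φ α (gam (i + 1) x) = gam i (shift φ α x) := by
  obtain ⟨b, hb, hφb⟩ := Finset.mem_image.1 hmem
  have hgam : gam (i + 1) x = b := by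
    rw [hG.gam_succ_eq hx hi, ← hφb, hG.left_inv α b (erase_subset_Iio hx hb)]
  rw [hgam]
  exact ⟨hb, hφb⟩

theorem gam_mem (hG : IsGamma n φ ψ gam) {i : ℕ} :
    ∀ {x : Finset ι}, i < min n x.card → gam i x ∈ x := by
  induction i with
  | zero =>
    intro x hi
    have hx : x.Nonempty := Finset.card_pos.1 (by omega)
    rw [hG.zero x hx]
    exact x.max'_mem hx
  | succ i ih =>
    intro x hi
    have hx := x.isGreatest_max' (Finset.card_pos.1 (by omega))
    have hcard := card_shift (hG.injOn _) hx
    exact Finset.mem_of_mem_erase (hG.gam_succ_of_mem hx hi (ih (by omega))).1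

theorem gam_succ_mem_erase (hG : IsGamma n φ ψ gam) (hx : IsGreatest (x : Set ι) α)
    {i : ℕ} (hi : i + 1 < min n x.card) :
    gam (i + 1) x ∈ x.erase α ∧ φ α (gam (i + 1) x) = gam i (shift φ α x) :=
  hG.gam_succ_of_mem hx hi <| hG.gam_mem <| by
    have := card_shift (hG.injOn α) hx
    omega

theorem gammaSet_subset (hG : IsGamma n φ ψ gam) (x : Finset ι) : gammaSet n gam x ⊆ x := by
  intro a ha
  obtain ⟨i, hi, rfl⟩ := Finset.mem_image.1 ha
  exact hG.gam_mem (Finset.mem_range.1 hi)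

theorem mem_gammaSet (hG : IsGamma (n + 1) φ ψ gam) (hx : IsGreatest (x : Set ι) α) :
    α ∈ gammaSet (n + 1) gam x := by
  have hcard : 0 < x.card := Finset.card_pos.2 ⟨α, hx.1⟩
  exact Finset.mem_image.2 ⟨0, Finset.mem_range.2 (by omega), hG.gam_zero_eq hx⟩

theorem isGreatest_of_gammaSet_eq {s : Finset ι} (hG : IsGamma (n + 1) φ ψ gam)
    (hs : IsGreatest (s : Set ι) α) (h : gammaSet (n + 1) gam x = s) :
    IsGreatest (x : Set ι) α := by
  have hsx : s ⊆ x := h ▸ hG.gammaSet_subset x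
  have hx : x.Nonempty := ⟨α, hsx hs.1⟩
  have hmax : x.max' hx ∈ s := h ▸ hG.mem_gammaSet (x.isGreatest_max' hx)
  exact ⟨hsx hs.1, fun b hb => (x.le_max' b hb).trans (hs.2 hmax)⟩

theorem gammaSet_shift (hG : IsGamma (n + 1) φ ψ gam) (hx : IsGreatest (x : Set ι) α) :
    gammaSet n gam (shift φ α x) = shift φ α (gammaSet (n + 1) gam x) := by
  have hcard := card_shift (hG.injOn α) hx
  have hpos : 0 < x.card := Finset.card_pos.2 ⟨α, hx.1⟩
  set m := min n (shift φ α x).card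
  have hk : min (n + 1) x.card = m + 1 := by omega
  have hsucc (i : ℕ) (hi : i ∈ Finset.range m) :
      gam (i + 1) x ∈ x.erase α ∧ φ α (gam (i + 1) x) = gam i (shift φ α x) :=
    hG.gam_succ_mem_erase hx (by rw [hk]; simpa using hi)
  have hsplit : gammaSet (n + 1) gam x =
      insert α ((Finset.range m).image fun i => gam (i + 1) x) := by
    rw [gammaSet, hk, Finset.range_add_one', Finset.image_insert, hG.gam_zero_eq hx,
      Finset.map_eq_image, Finset.image_image]
    rfl
  have hα : α ∉ (Finset.range m).image fun i => gam (i + 1) x := by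
    simp only [Finset.mem_image, not_exists, not_and]
    exact fun i hi => Finset.ne_of_mem_erase (hsucc i hi).1
  rw [hsplit, shift.eq_1 φ α (insert α _), Finset.erase_insert hα, Finset.image_image, gammaSet]
  exact Finset.image_congr fun i hi => (hsucc i hi).2.symm

end IsGamma

theorem card_ord_le_aleph_of_lt {n : ℕ} {α : Ordinal} (h : α < (aleph (n + 1 : ℕ)).ord) :
    α.card.ord ≤ (aleph n).ord := by
  rw [Cardinal.lt_ord, Nat.cast_succ, ← succ_aleph, Order.lt_succ_iff] at h
  exact Cardinal.ord_le_ord.2 h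

theorem countable_gammaFiber_zero (gam : ℕ → Finset Ordinal → Ordinal) (s : Finset Ordinal) :
    (gammaFiber 0 gam s).Countable := by
  have hω : (Set.Iio (aleph (0 : ℕ)).ord).Countable := by
    refine (Set.countable_range ((↑) : ℕ → Ordinal)).mono fun o ho => ?_
    rw [Nat.cast_zero, aleph_zero, ord_aleph0] at ho
    obtain ⟨k, rfl⟩ := Ordinal.lt_omega0.1 ho
    exact ⟨k, rfl⟩
  have hmaps : Set.MapsTo (fun x : Finset Ordinal => (x : Set Ordinal)) (gammaFiber 0 gam s)
      {t | t.Finite ∧ t ⊆ Set.Iio (aleph (0 : ℕ)).ord} := fun x hx =>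
    ⟨x.finite_toSet, (mem_gammaFiber.1 hx).1⟩
  exact hmaps.countable_of_injOn Finset.coe_injective.injOn (Set.countable_ofPred_finite_subset hω)

theorem countable_gammaFiber {φ ψ : Ordinal → Ordinal → Ordinal}
    {gam : ℕ → Finset Ordinal → Ordinal}
    (hφ : ∀ α : Ordinal, Set.MapsTo (φ α) (Set.Iio α) (Set.Iio α.card.ord)) :
    ∀ {n : ℕ}, IsGamma n φ ψ gam → ∀ s : Finset Ordinal, (gammaFiber n gam s).Countable
  | 0, _, s => countable_gammaFiber_zero gam s
  | n + 1, hG, s => by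
    rcases s.eq_empty_or_nonempty with rfl | hs
    · refine (Set.countable_singleton ∅).mono fun x hx =>
        Finset.eq_empty_of_forall_notMem fun a ha => ?_
      have hmem := hG.mem_gammaSet (x.isGreatest_max' ⟨a, ha⟩)
      rw [hx.2] at hmem
      exact Finset.notMem_empty _ hmem
    set α := s.max' hs
    have hmax : ∀ x ∈ gammaFiber (n + 1) gam s, IsGreatest (x : Set Ordinal) α := fun x hx =>
      hG.isGreatest_of_gammaSet_eq (s.isGreatest_max' hs) hx.2
    have hmaps : Set.MapsTo (shift φ α) (gammaFiber (n + 1) gam s)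
        (gammaFiber n gam (shift φ α s)) := by
      intro x hx
      have hα := card_ord_le_aleph_of_lt (hx.1 α (hmax x hx).1)
      refine mem_gammaFiber.2 ⟨?_, ?_⟩
      · exact shift_lt ((hφ α).mono_right (Set.Iio_subset_Iio hα)) (hmax x hx)
      · rw [hG.gammaSet_shift (hmax x hx), hx.2]
    exact hmaps.countable_of_injOn ((shift_injOn (hG.injOn α)).mono hmax)
      (countable_gammaFiber hφ hG.of_succ (shift φ α s))

theorem stmt_6_general (n : ℕ)
    (φ ψ : Ordinal → Ordinal → Ordinal)
    -- φ α is a bijection from {β : β < α} onto {β : β < ord |α|}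
    (hφ : ∀ α : Ordinal, Set.BijOn (φ α) (Set.Iio α) (Set.Iio (α.card).ord))
    -- ψ α is the inverse bijection φ α ⁻¹
    (hψ : ∀ α β : Ordinal, β < α → ψ α (φ α β) = β)
    (gam : ℕ → Finset Ordinal → Ordinal)
    -- γ₀(x) = max x
    (hgam0 : ∀ (x : Finset Ordinal) (h : x.Nonempty), gam 0 x = x.max' h)
    -- γ_{i+1}(x) = φ_{γ₀(x)}⁻¹ ( γ_i ( φ_{γ₀(x)} [ x ∩ γ₀(x) ] ) )
    (hgamS : ∀ (x : Finset Ordinal) (i : ℕ), i + 1 < min n x.card →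
        gam (i + 1) x =
          ψ (gam 0 x) (gam i ((x.filter (fun a => a < gam 0 x)).image (φ (gam 0 x)))))
    (s : Finset Ordinal) :
    {x : Finset Ordinal | (∀ a ∈ x, a < (aleph n).ord) ∧
        (Finset.range (min n x.card)).image (fun i => gam i x) = s}.Countable :=
  countable_gammaFiber (fun α => (hφ α).mapsTo) ⟨hψ, hgam0, hgamS⟩ s

theorem stmt_6 (n : ℕ) (hn : 1 ≤ n)
    (φ ψ : Ordinal → Ordinal → Ordinal)
    -- φ α is a bijection from {β : β < α} onto {β : β < ord |α|}
    (hφ : ∀ α : Ordinal, Set.BijOn (φ α) (Set.Iio α) (Set.Iio (α.card).ord))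
    -- ψ α is the inverse bijection φ α ⁻¹
    (hψ : ∀ α β : Ordinal, β < α → ψ α (φ α β) = β)
    (gam : ℕ → Finset Ordinal → Ordinal)
    -- γ₀(x) = max x
    (hgam0 : ∀ (x : Finset Ordinal) (h : x.Nonempty), gam 0 x = x.max' h)
    -- γ_{i+1}(x) = φ_{γ₀(x)}⁻¹ ( γ_i ( φ_{γ₀(x)} [ x ∩ γ₀(x) ] ) )
    (hgamS : ∀ (x : Finset Ordinal) (i : ℕ), i + 1 < min n x.card →
        gam (i + 1) x =
          ψ (gam 0 x) (gam i ((x.filter (fun a => a < gam 0 x)).image (φ (gam 0 x)))))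
    (s : Finset Ordinal) (hs : ∀ a ∈ s, a < (aleph n).ord) (hscard : s.card ≤ n) :
    {x : Finset Ordinal | (∀ a ∈ x, a < (aleph n).ord) ∧
        (Finset.range (min n x.card)).image (fun i => gam i x) = s}.Countable :=
  stmt_6_general n φ ψ hφ hψ gam hgam0 hgamS s
end

section
/- T_n ≥ 2^n − 1 for every n ≥ 1, with equality exactly when n = 1. -/
/-!
Since `C(n+i, n) ≥ C(n+1, n) = n + 1` for `i ≥ 1`, the sum defining `T n` is at least
`(n + 1) ∑_{i ≥ 1} C(n, i) = (n + 1)(2^n - 1)`, so `T n ≥ (n + 1)(2^n - 1) / 2`.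
This exceeds `2^n - 1` as soon as `n ≥ 2`, and `T 1 = 1 = 2^1 - 1`.
-/

open Finset

theorem Nat.sum_Icc_one_choose (n : ℕ) : ∑ i ∈ Icc 1 n, n.choose i = 2 ^ n - 1 := by
  have h := Nat.sum_range_choose n
  rw [range_eq_Ico, sum_eq_sum_Ico_succ_bot (Nat.succ_pos n), Nat.choose_zero_right] at h
  rw [← h, Nat.add_sub_cancel_left]
  rfl

theorem succ_mul_two_pow_sub_one_le_sum_choose_mul_choose (n : ℕ) :
    (n + 1) * (2 ^ n - 1) ≤ ∑ i ∈ Icc 1 n, (n + i).choose n * n.choose i := by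
  rw [← Nat.sum_Icc_one_choose, mul_sum]
  refine sum_le_sum fun i hi => Nat.mul_le_mul_right _ ?_
  rw [← Nat.choose_succ_self_right]
  exact Nat.choose_le_choose n (by simp only [mem_Icc] at hi; omega)

theorem succ_mul_two_pow_sub_one_div_two_le_T (n : ℕ) : (n + 1) * (2 ^ n - 1) / 2 ≤ T n :=
  Nat.div_le_div_right (succ_mul_two_pow_sub_one_le_sum_choose_mul_choose n)

theorem two_pow_sub_one_lt_T {n : ℕ} (hn : 2 ≤ n) : 2 ^ n - 1 < T n := by
  have h4 : 4 ≤ 2 ^ n := Nat.pow_le_pow_right two_pos hn |>.trans' (by norm_num)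
  have h3 : 3 * (2 ^ n - 1) ≤ (n + 1) * (2 ^ n - 1) := Nat.mul_le_mul_right _ (by omega)
  have hT := succ_mul_two_pow_sub_one_div_two_le_T n
  omega

theorem T_one : T 1 = 1 := by decide

theorem stmt_12 (n : ℕ) (hn : 1 ≤ n) :
    2 ^ n - 1 ≤ T n ∧ (T n = 2 ^ n - 1 ↔ n = 1) := by
  obtain rfl | hn2 : n = 1 ∨ 2 ≤ n := by omega
  · simp [T_one]
  · have hlt := two_pow_sub_one_lt_T hn2
    exact ⟨hlt.le, iff_of_false hlt.ne' (by omega)⟩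
end

section
/- T_n grows like c·(3+2√2)^n/√n: there exist constants 0 < c_1 < c_2 such that for all sufficiently large n, c_1·(3+2√2)^n/√n ≤ T_n ≤ c_2·(3+2√2)^n/√n. -/
open Finset

namespace Nat

theorem sum_range_choose_mul_choose (n a : ℕ) :
    ∑ k ∈ range (n + 1), n.choose k * k.choose a = n.choose a * 2 ^ (n - a) := by
  rcases lt_or_ge n a with han | han
  · rw [choose_eq_zero_of_lt han, zero_mul]
    exact sum_eq_zero fun k hk => by rw [choose_eq_zero_of_lt (n := k) (by grind), mul_zero]
  rw [← sum_subset (show Ico a (n + 1) ⊆ range (n + 1) by grind) fun k hk hk' => by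
      rw [choose_eq_zero_of_lt (n := k) (by grind), mul_zero],
    sum_Ico_eq_sum_range, show n + 1 - a = (n - a) + 1 by omega, ← sum_range_choose, mul_sum]
  refine sum_congr rfl fun j _ => ?_
  rw [choose_mul (by omega), Nat.add_sub_cancel_left]

theorem add_choose_left_eq_sum_choose_mul_choose {n k : ℕ} (hk : k ≤ n) :
    (n + k).choose n = ∑ a ∈ range (n + 1), n.choose a * k.choose a := by
  rw [choose_symm_add, add_choose_eq, Finset.Nat.sum_antidiagonal_eq_sum_range_succ_mk,
    ← sum_subset (range_subset_range.mpr (by omega : k + 1 ≤ n + 1)) fun a ha ha' => by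
      rw [choose_eq_zero_of_lt (n := k) (by grind), mul_zero]]
  exact sum_congr rfl fun a ha => by rw [choose_symm (by grind)]

theorem sum_add_choose_mul_choose (n : ℕ) :
    ∑ k ∈ range (n + 1), (n + k).choose n * n.choose k
      = ∑ k ∈ range (n + 1), n.choose k ^ 2 * 2 ^ k := calc
  _ = ∑ k ∈ range (n + 1), ∑ a ∈ range (n + 1), n.choose a * (n.choose k * k.choose a) := by
    refine sum_congr rfl fun k hk => ?_
    rw [add_choose_left_eq_sum_choose_mul_choose (by grind), sum_mul]
    exact sum_congr rfl fun a _ => by ring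
  _ = ∑ a ∈ range (n + 1), n.choose a ^ 2 * 2 ^ (n - a) := by
    rw [sum_comm]
    refine sum_congr rfl fun a _ => ?_
    rw [← mul_sum, sum_range_choose_mul_choose]
    ring
  _ = ∑ k ∈ range (n + 1), n.choose k ^ 2 * 2 ^ k := by
    rw [← sum_range_reflect]
    refine sum_congr rfl fun a ha => ?_
    rw [add_tsub_cancel_right, choose_symm (by grind), Nat.sub_sub_self (by grind)]

end Nat

def centralDelannoy (n : ℕ) : ℕ := ∑ k ∈ range (n + 1), n.choose k ^ 2 * 2 ^ k

theorem two_le_centralDelannoy {n : ℕ} (hn : 1 ≤ n) : 2 ≤ centralDelannoy n := calc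
  2 ≤ n.choose 1 ^ 2 * 2 ^ 1 := by rw [Nat.choose_one_right]; nlinarith
  _ ≤ centralDelannoy n :=
    single_le_sum (f := fun k => n.choose k ^ 2 * 2 ^ k) (fun _ _ => Nat.zero_le _)
      (mem_range.mpr (by omega))

theorem two_mul_T_add_one (n : ℕ) : 2 * T n + 1 = centralDelannoy n := by
  have hsplit : ∀ f : ℕ → ℕ, ∑ k ∈ range (n + 1), f k = f 0 + ∑ k ∈ Icc 1 n, f k := fun f => by
    rw [range_eq_Ico, Ico_add_one_right_eq_Icc, ← insert_Icc_add_one_left_eq_Icc (Nat.zero_le n),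
      sum_insert (by simp), zero_add]
  have hS : ∑ i ∈ Icc 1 n, (n + i).choose n * n.choose i
      = ∑ k ∈ Icc 1 n, n.choose k ^ 2 * 2 ^ k := by
    simpa [hsplit] using Nat.sum_add_choose_mul_choose n
  have heven : 2 ∣ ∑ k ∈ Icc 1 n, n.choose k ^ 2 * 2 ^ k :=
    dvd_sum fun k hk => dvd_mul_of_dvd_right (dvd_pow_self 2 (by grind)) _
  rw [T, hS, Nat.mul_div_cancel' heven, centralDelannoy, hsplit]
  simp [add_comm]

theorem pow_mul_le_of_forall_mul_le_succ {R : Type*} [Semiring R] [PartialOrder R]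
    [IsOrderedRing R] {u : ℕ → R} {r : R} (hr : 0 ≤ r) {m b : ℕ}
    (h : ∀ j < b, r * u (m + j) ≤ u (m + j + 1)) {j : ℕ} (hj : j ≤ b) :
    r ^ j * u m ≤ u (m + j) := by
  induction j with
  | zero => simp
  | succ j ih => calc
      r ^ (j + 1) * u m = r * (r ^ j * u m) := by rw [pow_succ', mul_assoc]
      _ ≤ r * u (m + j) := mul_le_mul_of_nonneg_left (ih (by omega)) hr
      _ ≤ u (m + (j + 1)) := h j (by omega)

/-- `P(Bin(n, p) = k)`. For `k > n` the truncated exponent `n - k` is harmless, since the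
binomial coefficient vanishes. -/
noncomputable def binomialWeight (n : ℕ) (p : ℝ) (k : ℕ) : ℝ :=
  n.choose k * p ^ k * (1 - p) ^ (n - k)

namespace binomialWeight

variable {n : ℕ} {p : ℝ}

theorem eq_eval_bernsteinPolynomial (n : ℕ) (p : ℝ) (k : ℕ) :
    binomialWeight n p k = (bernsteinPolynomial ℝ n k).eval p := by
  simp [binomialWeight, bernsteinPolynomial]

theorem eq_zero_of_lt {k : ℕ} (hk : n < k) : binomialWeight n p k = 0 := by
  simp [binomialWeight, Nat.choose_eq_zero_of_lt hk]

theorem nonneg (hp₀ : 0 ≤ p) (hp₁ : p ≤ 1) (k : ℕ) : 0 ≤ binomialWeight n p k := by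
  unfold binomialWeight
  have : 0 ≤ 1 - p := by linarith
  positivity

theorem pos (hp₀ : 0 < p) (hp₁ : p < 1) {k : ℕ} (hk : k ≤ n) : 0 < binomialWeight n p k := by
  have : 0 < 1 - p := by linarith
  have : 0 < n.choose k := Nat.choose_pos hk
  unfold binomialWeight
  positivity

theorem sum_range (n : ℕ) (p : ℝ) : ∑ k ∈ range (n + 1), binomialWeight n p k = 1 := by
  simpa [eq_eval_bernsteinPolynomial, Polynomial.eval_finsetSum] using
    congrArg (Polynomial.eval p) (bernsteinPolynomial.sum ℝ n)

theorem sum_range_sq_sub_mul (n : ℕ) (p : ℝ) :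
    ∑ k ∈ range (n + 1), (n * p - k) ^ 2 * binomialWeight n p k = n * p * (1 - p) := by
  simpa [eq_eval_bernsteinPolynomial, Polynomial.eval_finsetSum] using
    congrArg (Polynomial.eval p) (bernsteinPolynomial.variance ℝ n)

theorem succ_mul (n : ℕ) (p : ℝ) (k : ℕ) :
    binomialWeight n p (k + 1) * ((k + 1) * (1 - p)) = binomialWeight n p k * (p * (n - k)) := by
  rcases lt_or_ge k n with hk | hk
  · have hchoose : (n.choose (k + 1) : ℝ) * (k + 1) = n.choose k * (n - k) := by
      have := congrArg (Nat.cast : ℕ → ℝ) (Nat.choose_succ_right_eq n k)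
      push_cast [Nat.cast_sub hk.le] at this
      exact this
    have hexp : n - k = (n - (k + 1)) + 1 := by omega
    calc binomialWeight n p (k + 1) * ((k + 1) * (1 - p))
        = (n.choose (k + 1) * (k + 1)) * p ^ (k + 1) * (1 - p) ^ (n - (k + 1) + 1) := by
          rw [binomialWeight, pow_succ (1 - p)]; ring
      _ = binomialWeight n p k * (p * (n - k)) := by
          rw [hchoose, binomialWeight, hexp, pow_succ p]; ring
  · obtain rfl | hk := hk.eq_or_lt
    · simp [eq_zero_of_lt (Nat.lt_succ_self _)]
    · simp [eq_zero_of_lt hk, eq_zero_of_lt (hk.trans (Nat.lt_succ_self k))]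

theorem half_le_sum_near (hp₀ : 0 ≤ p) (hp₁ : p ≤ 1) {b : ℕ} (hb : n < 2 * b ^ 2) :
    1 / 2 ≤ ∑ k ∈ range (n + 1) with (⌊n * p⌋₊ - b ≤ k ∧ k ≤ ⌊n * p⌋₊ + b),
      binomialWeight n p k := by
  set c := ⌊n * p⌋₊
  set w := binomialWeight n p
  have hw : ∀ k, 0 ≤ w k := nonneg hp₀ hp₁
  have hb' : (n : ℝ) < 2 * b ^ 2 := by exact_mod_cast hb
  have hfar : ∀ k, ¬(c - b ≤ k ∧ k ≤ c + b) → (b : ℝ) ^ 2 ≤ (n * p - k) ^ 2 := by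
    intro k hk
    have hc₁ : (c : ℝ) ≤ n * p := Nat.floor_le (by positivity)
    have hc₂ : n * p < c + 1 := Nat.lt_floor_add_one _
    rcases (by omega : k + b < c ∨ c + b + 1 ≤ k) with h | h
    · have h' : (k : ℝ) + b < c := by exact_mod_cast h
      exact pow_le_pow_left₀ b.cast_nonneg (by linarith) 2
    · have h' : (c : ℝ) + b + 1 ≤ k := by exact_mod_cast h
      nlinarith
  have hchebyshev : b ^ 2 * ∑ k ∈ range (n + 1) with ¬(c - b ≤ k ∧ k ≤ c + b), w k
      ≤ n * p * (1 - p) := calc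
    _ = ∑ k ∈ range (n + 1) with ¬(c - b ≤ k ∧ k ≤ c + b), (b : ℝ) ^ 2 * w k := mul_sum ..
    _ ≤ ∑ k ∈ range (n + 1) with ¬(c - b ≤ k ∧ k ≤ c + b), (n * p - k) ^ 2 * w k :=
      sum_le_sum fun k hk => mul_le_mul_of_nonneg_right (hfar k (mem_filter.mp hk).2) (hw k)
    _ ≤ ∑ k ∈ range (n + 1), (n * p - k) ^ 2 * w k :=
      sum_le_sum_of_subset_of_nonneg (filter_subset _ _) fun k _ _ => by have := hw k; positivity
    _ = n * p * (1 - p) := sum_range_sq_sub_mul n p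
  have hvar : (n : ℝ) * p * (1 - p) ≤ n / 4 := by nlinarith [sq_nonneg (p - 1 / 2)]
  have := sum_filter_add_sum_filter_not (range (n + 1)) (fun k => c - b ≤ k ∧ k ≤ c + b) w
  rw [sum_range] at this
  nlinarith

theorem one_le_four_mul_sum_sq (hp₀ : 0 ≤ p) (hp₁ : p ≤ 1) {b : ℕ} (hb : n < 2 * b ^ 2) :
    1 ≤ 4 * (2 * b + 1) * ∑ k ∈ range (n + 1), binomialWeight n p k ^ 2 := by
  set c := ⌊n * p⌋₊
  set near := {k ∈ range (n + 1) | c - b ≤ k ∧ k ≤ c + b}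
  have hcard : (#near : ℝ) ≤ 2 * b + 1 := by
    have : #near ≤ 2 * b + 1 := calc
      _ ≤ #(Icc (c - b) (c + b)) := card_le_card fun k hk => by
        simp only [near, mem_filter, mem_Icc] at hk ⊢
        omega
      _ ≤ 2 * b + 1 := by rw [Nat.card_Icc]; omega
    exact_mod_cast this
  have hnear : 1 / 2 ≤ ∑ k ∈ near, binomialWeight n p k := half_le_sum_near hp₀ hp₁ hb
  calc (1 : ℝ) ≤ 4 * (∑ k ∈ near, binomialWeight n p k) ^ 2 := by nlinarith
    _ ≤ 4 * (#near * ∑ k ∈ near, binomialWeight n p k ^ 2) := by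
      gcongr; exact sq_sum_le_card_mul_sum_sq
    _ ≤ 4 * ((2 * b + 1) * ∑ k ∈ range (n + 1), binomialWeight n p k ^ 2) := by
      gcongr
      exact filter_subset _ _
    _ = _ := by ring

-- The two inequalities are `w (m + 1) ≤ w m` and `w (m - 1) ≤ w m`, rewritten with `succ_mul`.
theorem exists_forall_le (hp₀ : 0 < p) (hp₁ : p < 1) (n : ℕ) :
    ∃ m ≤ n, (∀ k, binomialWeight n p k ≤ binomialWeight n p m) ∧
      p * (n - m) ≤ (1 - p) * (m + 1) ∧ (1 - p) * m ≤ p * (n + 1 - m) := by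
  obtain ⟨m, hmn, hmax⟩ :=
    exists_max_image (range (n + 1)) (binomialWeight n p) nonempty_range_add_one
  rw [mem_range_succ_iff] at hmn
  have hle : ∀ k, binomialWeight n p k ≤ binomialWeight n p m := fun k => by
    rcases le_or_gt k n with hk | hk
    · exact hmax k (mem_range_succ_iff.mpr hk)
    · rw [eq_zero_of_lt hk]
      exact nonneg hp₀.le hp₁.le m
  have hq : 0 < 1 - p := by linarith
  have hpos := pos hp₀ hp₁ hmn
  refine ⟨m, hmn, hle, le_of_mul_le_mul_left ?_ hpos, ?_⟩
  · calc binomialWeight n p m * (p * (n - m))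
        = binomialWeight n p (m + 1) * ((m + 1) * (1 - p)) := (succ_mul n p m).symm
      _ ≤ binomialWeight n p m * ((1 - p) * (m + 1)) := by
        rw [mul_comm (1 - p)]
        exact mul_le_mul_of_nonneg_right (hle _) (by positivity)
  · rcases m with _ | j
    · simp only [CharP.cast_eq_zero, mul_zero, sub_zero]
      positivity
    · refine le_of_mul_le_mul_left ?_ hpos
      have hjn : (j : ℝ) + 1 ≤ n := by exact_mod_cast hmn
      calc binomialWeight n p (j + 1) * ((1 - p) * ↑(j + 1))
          = binomialWeight n p j * (p * (n - j)) := by rw [← succ_mul]; push_cast; ring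
        _ ≤ binomialWeight n p (j + 1) * (p * (n + 1 - ↑(j + 1))) := by
          push_cast
          exact mul_le_mul (hle j) (le_of_eq (by ring)) (by nlinarith) hpos.le

theorem one_sub_mul_le_succ (hp₀ : 0 < p) (hp₁ : p < 1) {m b j : ℕ}
    (hm : (1 - p) * m ≤ p * (n + 1 - m)) (hj : j < b) :
    (1 - b / ((1 - p) * (m + 1))) * binomialWeight n p (m + j)
      ≤ binomialWeight n p (m + j + 1) := by
  have hq : 0 < 1 - p := by linarith
  have hjb : (j : ℝ) + 1 ≤ b := by exact_mod_cast hj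
  have hratio : (1 - b / ((1 - p) * (m + 1))) * ((m + j + 1) * (1 - p)) ≤ p * (n - (m + j)) := by
    have hshift : (j + 1 : ℝ) ≤ b / ((1 - p) * (m + 1)) * ((m + j + 1) * (1 - p)) := by
      have : (j + 1 : ℝ) * (m + 1) ≤ b * (m + j + 1) := by nlinarith
      rw [div_mul_eq_mul_div, le_div_iff₀ (by positivity)]
      nlinarith [mul_le_mul_of_nonneg_left this hq.le]
    rw [sub_mul, one_mul]
    linarith
  refine le_of_mul_le_mul_right ?_ (by positivity : (0 : ℝ) < (m + j + 1) * (1 - p))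
  calc (1 - b / ((1 - p) * (m + 1))) * binomialWeight n p (m + j) * ((m + j + 1) * (1 - p))
      ≤ binomialWeight n p (m + j) * (p * (n - (m + j))) := by
        rw [mul_comm _ (binomialWeight n p _), mul_assoc]
        exact mul_le_mul_of_nonneg_left hratio (nonneg hp₀.le hp₁.le _)
    _ = binomialWeight n p (m + j + 1) * ((m + j + 1) * (1 - p)) := by
        have := succ_mul n p (m + j)
        push_cast at this
        rw [this]

theorem half_le_of_mem_Ico (hp₀ : 0 < p) (hp₁ : p < 1) {m b : ℕ}
    (hup : p * (n - m) ≤ (1 - p) * (m + 1)) (hdown : (1 - p) * m ≤ p * (n + 1 - m))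
    (hb : 2 * b ^ 2 ≤ p * (1 - p) * n) {k : ℕ} (hk : k ∈ Ico m (m + b)) :
    binomialWeight n p m / 2 ≤ binomialWeight n p k := by
  obtain ⟨j, rfl⟩ := Nat.exists_eq_add_of_le (mem_Ico.mp hk).1
  have hjb : j < b := by grind
  have hq : 0 < 1 - p := by linarith
  have hb₁ : (1 : ℝ) ≤ b := by exact_mod_cast (by omega : 1 ≤ b)
  set δ := b / ((1 - p) * (m + 1)) with hδ
  have hδ₀ : 0 ≤ δ := by positivity
  have hbδ : b * δ ≤ 1 / 2 := by
    rw [hδ, mul_div_assoc', div_le_iff₀ (by positivity)]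
    nlinarith
  have hδ₁ : δ ≤ 1 / 2 := by nlinarith
  calc binomialWeight n p m / 2 ≤ (1 - δ) ^ j * binomialWeight n p m := by
        have hbernoulli := one_add_mul_le_pow (by linarith : (-2 : ℝ) ≤ -δ) b
        rw [← sub_eq_add_neg] at hbernoulli
        have := pow_le_pow_of_le_one (by linarith : 0 ≤ 1 - δ) (by linarith) hjb.le
        rw [div_eq_inv_mul]
        exact mul_le_mul_of_nonneg_right (by linarith) (nonneg hp₀.le hp₁.le m)
    _ ≤ binomialWeight n p (m + j) :=
        pow_mul_le_of_forall_mul_le_succ (by linarith)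
          (fun j hj => one_sub_mul_le_succ hp₀ hp₁ hdown hj) hjb.le

theorem natCast_mul_le_two (hp₀ : 0 < p) (hp₁ : p < 1) {b : ℕ}
    (hb : 2 * b ^ 2 ≤ p * (1 - p) * n) (k : ℕ) : b * binomialWeight n p k ≤ 2 := by
  obtain ⟨m, hmn, hmax, hup, hdown⟩ := exists_forall_le hp₀ hp₁ n
  have hwin := fun k (hk : k ∈ Ico m (m + b)) => half_le_of_mem_Ico hp₀ hp₁ hup hdown hb hk
  have hsub : Ico m (m + b) ⊆ range (n + 1) := fun k hk => by
    rw [mem_range_succ_iff]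
    by_contra! h
    linarith [hwin k hk, eq_zero_of_lt (p := p) h, pos hp₀ hp₁ hmn]
  calc b * binomialWeight n p k ≤ 2 * ∑ k ∈ Ico m (m + b), binomialWeight n p m / 2 := by
        rw [sum_const, Nat.card_Ico, add_tsub_cancel_left, nsmul_eq_mul]
        nlinarith [hmax k, nonneg (n := n) hp₀.le hp₁.le k]
    _ ≤ 2 * ∑ k ∈ range (n + 1), binomialWeight n p k := by
        gcongr
        exact (sum_le_sum hwin).trans
          (sum_le_sum_of_subset_of_nonneg hsub fun k _ _ => nonneg hp₀.le hp₁.le k)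
    _ = 2 := by rw [sum_range, mul_one]

theorem natCast_mul_sum_sq_le_two (hp₀ : 0 < p) (hp₁ : p < 1) {b : ℕ}
    (hb : 2 * b ^ 2 ≤ p * (1 - p) * n) :
    b * ∑ k ∈ range (n + 1), binomialWeight n p k ^ 2 ≤ 2 := calc
  _ = ∑ k ∈ range (n + 1), binomialWeight n p k * (b * binomialWeight n p k) := by
    rw [mul_sum]; exact sum_congr rfl fun k _ => by ring
  _ ≤ ∑ k ∈ range (n + 1), binomialWeight n p k * 2 :=
    sum_le_sum fun k _ => mul_le_mul_of_nonneg_left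
      (natCast_mul_le_two hp₀ hp₁ hb k) (nonneg hp₀.le hp₁.le k)
  _ = 2 := by rw [← sum_mul, sum_range, one_mul]

end binomialWeight

theorem choose_mul_pow_eq_mul_binomialWeight {x : ℝ} (hx : 1 + x ≠ 0) (n k : ℕ) :
    (n.choose k : ℝ) * x ^ k = (1 + x) ^ n * binomialWeight n (x / (1 + x)) k := by
  rcases le_or_gt k n with hk | hk
  · have hq : 1 - x / (1 + x) = 1 / (1 + x) := by field_simp; ring
    obtain ⟨j, rfl⟩ := Nat.exists_eq_add_of_le hk
    rw [binomialWeight, hq, Nat.add_sub_cancel_left, pow_add, div_pow, div_pow, one_pow]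
    field_simp
  · rw [binomialWeight.eq_zero_of_lt hk, Nat.choose_eq_zero_of_lt hk]
    simp

theorem centralDelannoy_eq_mul_sum_sq (n : ℕ) :
    (centralDelannoy n : ℝ)
      = (3 + 2 * √2) ^ n * ∑ k ∈ range (n + 1), binomialWeight n (2 - √2) k ^ 2 := by
  have h2 : √2 ^ 2 = 2 := Real.sq_sqrt zero_le_two
  have hp : √2 / (1 + √2) = 2 - √2 := by
    rw [div_eq_iff (by positivity)]
    linear_combination h2
  have hs : (1 + √2) ^ 2 = 3 + 2 * √2 := by linear_combination h2
  rw [centralDelannoy, mul_sum]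
  push_cast
  refine sum_congr rfl fun k _ => ?_
  calc (n.choose k : ℝ) ^ 2 * 2 ^ k = (n.choose k * √2 ^ k) ^ 2 := by
        rw [mul_pow, ← pow_mul, mul_comm k, pow_mul, h2]
    _ = ((1 + √2) ^ n * binomialWeight n (2 - √2) k) ^ 2 := by
        rw [choose_mul_pow_eq_mul_binomialWeight (by positivity), hp]
    _ = (3 + 2 * √2) ^ n * binomialWeight n (2 - √2) k ^ 2 := by
        rw [mul_pow, ← pow_mul, mul_comm n, pow_mul, hs]

theorem pow_le_mul_centralDelannoy {n : ℕ} (hn : 1 ≤ n) :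
    (3 + 2 * √2) ^ n ≤ 20 * √n * centralDelannoy n := by
  have h2 : √2 ^ 2 = 2 := Real.sq_sqrt zero_le_two
  have hsqrt2 : 1 ≤ √2 := Real.one_le_sqrt.mpr one_le_two
  set b := ⌊√n⌋₊ + 1
  have hb : n < 2 * b ^ 2 := by
    have hlt : √n < b := by push_cast [b]; exact Nat.lt_floor_add_one _
    have : (n : ℝ) < b ^ 2 := by
      rw [← Real.sq_sqrt n.cast_nonneg]
      exact pow_lt_pow_left₀ hlt (Real.sqrt_nonneg _) two_ne_zero
    have : (n : ℝ) < 2 * b ^ 2 := by nlinarith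
    exact_mod_cast this
  have hb' : 2 * (b : ℝ) + 1 ≤ 5 * √n := by
    have : (b : ℝ) ≤ √n + 1 := by push_cast [b]; linarith [Nat.floor_le (Real.sqrt_nonneg n)]
    have : 1 ≤ √n := Real.one_le_sqrt.mpr (by exact_mod_cast hn)
    linarith
  have key := binomialWeight.one_le_four_mul_sum_sq (p := 2 - √2) (by nlinarith) (by linarith) hb
  rw [centralDelannoy_eq_mul_sum_sq]
  set S := ∑ k ∈ range (n + 1), binomialWeight n (2 - √2) k ^ 2
  have hS : 0 ≤ S := sum_nonneg fun k _ => sq_nonneg _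
  calc (3 + 2 * √2) ^ n ≤ (3 + 2 * √2) ^ n * (4 * (2 * b + 1) * S) :=
        le_mul_of_one_le_right (by positivity) key
    _ ≤ (3 + 2 * √2) ^ n * (4 * (5 * √n) * S) := by gcongr
    _ = _ := by ring

theorem sqrt_mul_centralDelannoy_le {n : ℕ} (hn : 36 ≤ n) :
    √n * centralDelannoy n ≤ 12 * (3 + 2 * √2) ^ n := by
  have h2 : √2 ^ 2 = 2 := Real.sq_sqrt zero_le_two
  have hsqrt2 : 38 / 27 ≤ √2 := Real.le_sqrt' (by norm_num) |>.mpr (by norm_num)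
  have hn' : 6 ≤ √n := Real.le_sqrt' (by norm_num) |>.mpr (by norm_num; exact_mod_cast hn)
  set b := ⌊√n / 3⌋₊
  have hb₁ : (b : ℝ) ≤ √n / 3 := Nat.floor_le (by positivity)
  have hb₂ : √n / 3 < b + 1 := Nat.lt_floor_add_one _
  have hb : 2 * b ^ 2 ≤ (2 - √2) * (1 - (2 - √2)) * n := by
    have hpq : 2 / 9 ≤ (2 - √2) * (1 - (2 - √2)) := by nlinarith
    have : 9 * (b : ℝ) ^ 2 ≤ n := by rw [← Real.sq_sqrt n.cast_nonneg]; nlinarith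
    nlinarith [mul_le_mul_of_nonneg_right hpq n.cast_nonneg]
  have key := binomialWeight.natCast_mul_sum_sq_le_two (p := 2 - √2) (by nlinarith) (by linarith) hb
  rw [centralDelannoy_eq_mul_sum_sq]
  set S := ∑ k ∈ range (n + 1), binomialWeight n (2 - √2) k ^ 2
  have hS : 0 ≤ S := sum_nonneg fun k _ => sq_nonneg _
  calc √n * ((3 + 2 * √2) ^ n * S) ≤ (3 + 2 * √2) ^ n * (6 * (b * S)) := by
        rw [mul_left_comm, ← mul_assoc 6]
        gcongr
        linarith
    _ ≤ (3 + 2 * √2) ^ n * (6 * 2) := by gcongr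
    _ = _ := by ring

theorem stmt_18 :
    ∃ c₁ c₂ : ℝ, 0 < c₁ ∧ c₁ < c₂ ∧ ∃ N : ℕ, ∀ n : ℕ, N ≤ n →
      c₁ * (3 + 2 * Real.sqrt 2) ^ n / Real.sqrt n ≤ (T n : ℝ) ∧
      (T n : ℝ) ≤ c₂ * (3 + 2 * Real.sqrt 2) ^ n / Real.sqrt n := by
  refine ⟨1 / 80, 6, by norm_num, by norm_num, 36, fun n hn => ?_⟩
  have hT : 2 * (T n : ℝ) + 1 = centralDelannoy n := by exact_mod_cast two_mul_T_add_one n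
  have hT₁ : (1 : ℝ) ≤ T n := by
    have := two_mul_T_add_one n ▸ two_le_centralDelannoy (n := n) (by omega)
    exact_mod_cast (by omega : 1 ≤ T n)
  have hlower := pow_le_mul_centralDelannoy (n := n) (by omega)
  have hupper := sqrt_mul_centralDelannoy_le hn
  have hsqrt : 0 < √n := Real.sqrt_pos.mpr (by positivity)
  constructor
  · rw [div_le_iff₀ hsqrt]; nlinarith
  · rw [le_div_iff₀ hsqrt]; nlinarith
end
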